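/- Let E and F be Banach ideal spaces. Then E ⊙ F with the quasi-norm ‖z‖ = inf{‖x‖_E‖y‖_F : z = xy} satisfies the quasi-triangle inequality ‖x + y‖_{E⊙F} ≤ 2(‖x‖_{E⊙F} + ‖y‖_{E⊙F}). -/
import Mathlib


open MeasureTheory

/-- A Banach ideal space on a measure space: a linear subspace of measurable
functions (mod null sets) with a complete lattice norm having the ideal property,
and a weak unit (saturation). -/
structure IdealSpace {α : Type*} [MeasurableSpace α] (μ : Measure α) where
  carrier : Set (α → ℝ)
  norm : (α → ℝ) → ℝ
  zero_mem : (0 : α → ℝ) ∈ carrier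
  add_mem : ∀ {f g : α → ℝ}, f ∈ carrier → g ∈ carrier → f + g ∈ carrier
  smul_mem : ∀ (c : ℝ) {f : α → ℝ}, f ∈ carrier → c • f ∈ carrier
  norm_nonneg : ∀ f, 0 ≤ norm f
  norm_eq_zero : ∀ f ∈ carrier, (norm f = 0 ↔ f =ᵐ[μ] 0)
  norm_add : ∀ f g, f ∈ carrier → g ∈ carrier → norm (f + g) ≤ norm f + norm g
  norm_smul : ∀ (c : ℝ) (f : α → ℝ), norm (c • f) = |c| * norm f
  ideal_mem : ∀ {f g : α → ℝ}, g ∈ carrier → (∀ᵐ a ∂μ, |f a| ≤ |g a|) → f ∈ carrier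
  ideal_norm : ∀ {f g : α → ℝ}, g ∈ carrier → (∀ᵐ a ∂μ, |f a| ≤ |g a|) → norm f ≤ norm g
  weak_unit : ∃ w ∈ carrier, ∀ᵐ a ∂μ, 0 < w a
  complete : ∀ x : ℕ → α → ℝ, (∀ n, x n ∈ carrier) →
    (∀ ε > 0, ∃ N, ∀ m ≥ N, ∀ n ≥ N, norm (x m - x n) < ε) →
    ∃ f ∈ carrier, Filter.Tendsto (fun n => norm (x n - f)) Filter.atTop (nhds 0)

variable {α : Type*} [MeasurableSpace α] {μ : Measure α}

/-- The pointwise product space E ⊙ F. -/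
def prodSet (E F : IdealSpace μ) : Set (α → ℝ) :=
  {z | ∃ x ∈ E.carrier, ∃ y ∈ F.carrier, z =ᵐ[μ] x * y}

/-- The quasi-norm of the pointwise product space E ⊙ F. -/
noncomputable def prodNorm (E F : IdealSpace μ) (z : α → ℝ) : ℝ :=
  sInf {r | ∃ x ∈ E.carrier, ∃ y ∈ F.carrier, z =ᵐ[μ] x * y ∧ r = E.norm x * F.norm y}

section Aux
open Filter

variable {α : Type*} [MeasurableSpace α] {μ : Measure α}

private lemma IdealSpace.norm_zero' (E : IdealSpace μ) : E.norm 0 = 0 := by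
  have h := E.norm_smul 0 0
  simpa using h

private lemma IdealSpace.abs_mem' (E : IdealSpace μ) {x : α → ℝ} (hx : x ∈ E.carrier) :
    (fun a => |x a|) ∈ E.carrier :=
  E.ideal_mem hx (Eventually.of_forall fun a => by simp [abs_abs])

private lemma IdealSpace.norm_abs_le' (E : IdealSpace μ) {x : α → ℝ} (hx : x ∈ E.carrier) :
    E.norm (fun a => |x a|) ≤ E.norm x :=
  E.ideal_norm hx (Eventually.of_forall fun a => by simp [abs_abs])

private lemma prodNorm_le' (E F : IdealSpace μ) {z x y : α → ℝ} (hx : x ∈ E.carrier)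
    (hy : y ∈ F.carrier) (hz : z =ᵐ[μ] x * y) :
    prodNorm E F z ≤ E.norm x * F.norm y := by
  apply csInf_le
  · exact ⟨0, fun r ⟨x', hx', y', hy', _, hr⟩ =>
      hr ▸ mul_nonneg (E.norm_nonneg x') (F.norm_nonneg y')⟩
  · exact ⟨x, hx, y, hy, hz, rfl⟩

private lemma prodNorm_nonneg' (E F : IdealSpace μ) (z : α → ℝ) :
    0 ≤ prodNorm E F z :=
  Real.sInf_nonneg (fun r ⟨x', _, y', _, _, hr⟩ =>
    hr ▸ mul_nonneg (E.norm_nonneg x') (F.norm_nonneg y'))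

private lemma exists_balanced' (E F : IdealSpace μ) {z : α → ℝ} (hz : z ∈ prodSet E F)
    {ε : ℝ} (hε : 0 < ε) :
    ∃ x ∈ E.carrier, ∃ y ∈ F.carrier, z =ᵐ[μ] x * y ∧
      E.norm x ≤ Real.sqrt (prodNorm E F z + ε) ∧
      F.norm y ≤ Real.sqrt (prodNorm E F z + ε) := by
  obtain ⟨x0, hx0, y0, hy0, hz0⟩ := hz
  have hne : {r | ∃ x ∈ E.carrier, ∃ y ∈ F.carrier, z =ᵐ[μ] x * y ∧
      r = E.norm x * F.norm y}.Nonempty := ⟨_, x0, hx0, y0, hy0, hz0, rfl⟩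
  have hlt : prodNorm E F z < prodNorm E F z + ε := lt_add_of_pos_right _ hε
  obtain ⟨r, ⟨x, hx, y, hy, hzxy, hr⟩, hrlt⟩ := exists_lt_of_csInf_lt hne hlt
  subst hr
  set N := prodNorm E F z with hN
  have hN0 : 0 ≤ N := prodNorm_nonneg' E F z
  set a := E.norm x with ha
  set b := F.norm y with hb
  have ha0 : 0 ≤ a := E.norm_nonneg x
  have hb0 : 0 ≤ b := F.norm_nonneg y
  by_cases hae : a = 0
  · -- x =ᵐ 0, so z =ᵐ 0 = 0 * 0
    have hx00 : x =ᵐ[μ] 0 := ((E.norm_eq_zero x hx).mp hae)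
    refine ⟨0, E.zero_mem, 0, F.zero_mem, ?_, ?_, ?_⟩
    · filter_upwards [hzxy, hx00] with w h1 h2
      simp [h1, Pi.mul_apply, h2, Pi.zero_apply]
    · simpa [E.norm_zero'] using Real.sqrt_nonneg (N + ε)
    · simpa [F.norm_zero'] using Real.sqrt_nonneg (N + ε)
  by_cases hbe : b = 0
  · have hy00 : y =ᵐ[μ] 0 := ((F.norm_eq_zero y hy).mp hbe)
    refine ⟨0, E.zero_mem, 0, F.zero_mem, ?_, ?_, ?_⟩
    · filter_upwards [hzxy, hy00] with w h1 h2
      simp [h1, Pi.mul_apply, h2, Pi.zero_apply]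
    · simpa [E.norm_zero'] using Real.sqrt_nonneg (N + ε)
    · simpa [F.norm_zero'] using Real.sqrt_nonneg (N + ε)
  have hap : 0 < a := lt_of_le_of_ne ha0 (Ne.symm hae)
  have hbp : 0 < b := lt_of_le_of_ne hb0 (Ne.symm hbe)
  have hsap : 0 < Real.sqrt a := Real.sqrt_pos.mpr hap
  have hsbp : 0 < Real.sqrt b := Real.sqrt_pos.mpr hbp
  set t : ℝ := Real.sqrt b / Real.sqrt a with ht
  have htp : 0 < t := div_pos hsbp hsap
  refine ⟨t • x, E.smul_mem t hx, t⁻¹ • y, F.smul_mem t⁻¹ hy, ?_, ?_, ?_⟩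
  · have heq : (t • x) * (t⁻¹ • y) = x * y := by
      funext w
      simp only [Pi.mul_apply, Pi.smul_apply, smul_eq_mul]
      field_simp
    rw [heq]; exact hzxy
  · rw [E.norm_smul, abs_of_pos htp, ← ha]
    have haa : Real.sqrt a * Real.sqrt a = a := Real.mul_self_sqrt ha0
    have h1 : t * a = Real.sqrt a * Real.sqrt b := by
      rw [ht]; field_simp; nlinarith
    rw [h1, ← Real.sqrt_mul ha0]
    exact Real.sqrt_le_sqrt (le_of_lt hrlt)
  · rw [F.norm_smul, abs_of_pos (inv_pos.mpr htp), ← hb]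
    have haa : Real.sqrt a * Real.sqrt a = a := Real.mul_self_sqrt ha0
    have hbb : Real.sqrt b * Real.sqrt b = b := Real.mul_self_sqrt hb0
    have h1 : t⁻¹ * b = Real.sqrt a * Real.sqrt b := by
      rw [ht]; field_simp; nlinarith
    rw [h1, ← Real.sqrt_mul ha0]
    exact Real.sqrt_le_sqrt (le_of_lt hrlt)

private lemma sum_rep' (E F : IdealSpace μ) {z₁ z₂ x₁ y₁ x₂ y₂ : α → ℝ}
    (hx₁ : x₁ ∈ E.carrier) (hy₁ : y₁ ∈ F.carrier) (h1 : z₁ =ᵐ[μ] x₁ * y₁)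
    (hx₂ : x₂ ∈ E.carrier) (hy₂ : y₂ ∈ F.carrier) (h2 : z₂ =ᵐ[μ] x₂ * y₂) :
    ∃ u ∈ E.carrier, ∃ v ∈ F.carrier, (z₁ + z₂) =ᵐ[μ] u * v ∧
      E.norm u ≤ E.norm x₁ + E.norm x₂ ∧ F.norm v ≤ F.norm y₁ + F.norm y₂ := by
  classical
  set u : α → ℝ := fun a => |x₁ a| + |x₂ a| with hu
  set v : α → ℝ := fun a => if u a = 0 then 0 else (x₁ a * y₁ a + x₂ a * y₂ a) / u a with hv
  have huE : u ∈ E.carrier := by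
    have : u = (fun a => |x₁ a|) + (fun a => |x₂ a|) := by funext a; rfl
    rw [this]
    exact E.add_mem (E.abs_mem' hx₁) (E.abs_mem' hx₂)
  have hunorm : E.norm u ≤ E.norm x₁ + E.norm x₂ := by
    have : u = (fun a => |x₁ a|) + (fun a => |x₂ a|) := by funext a; rfl
    calc E.norm u ≤ E.norm (fun a => |x₁ a|) + E.norm (fun a => |x₂ a|) := by
          rw [this]; exact E.norm_add _ _ (E.abs_mem' hx₁) (E.abs_mem' hx₂)
      _ ≤ E.norm x₁ + E.norm x₂ := add_le_add (E.norm_abs_le' hx₁) (E.norm_abs_le' hx₂)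
  have hvbound : ∀ a, |v a| ≤ |(fun a => |y₁ a| + |y₂ a|) a| := by
    intro a
    have hy12 : (0:ℝ) ≤ |y₁ a| + |y₂ a| := add_nonneg (abs_nonneg _) (abs_nonneg _)
    simp only [hv]
    by_cases h : u a = 0
    · rw [if_pos h, abs_zero]
      exact le_trans hy12 (le_abs_self _)
    · have hup : 0 < u a := lt_of_le_of_ne (add_nonneg (abs_nonneg _) (abs_nonneg _)) (Ne.symm h)
      rw [if_neg h, abs_div, abs_of_pos hup, div_le_iff₀ hup, abs_of_nonneg hy12]
      have habs : |x₁ a * y₁ a + x₂ a * y₂ a| ≤ |x₁ a| * |y₁ a| + |x₂ a| * |y₂ a| := by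
        calc |x₁ a * y₁ a + x₂ a * y₂ a| ≤ |x₁ a * y₁ a| + |x₂ a * y₂ a| := abs_add_le _ _
          _ = |x₁ a| * |y₁ a| + |x₂ a| * |y₂ a| := by rw [abs_mul, abs_mul]
      have huaa : u a = |x₁ a| + |x₂ a| := rfl
      nlinarith [abs_nonneg (x₁ a), abs_nonneg (x₂ a), abs_nonneg (y₁ a), abs_nonneg (y₂ a)]
  have hvF : v ∈ F.carrier :=
    F.ideal_mem (F.add_mem (F.abs_mem' hy₁) (F.abs_mem' hy₂)) (Eventually.of_forall hvbound)
  have hvnorm : F.norm v ≤ F.norm y₁ + F.norm y₂ := by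
    calc F.norm v ≤ F.norm ((fun a => |y₁ a|) + (fun a => |y₂ a|)) := by
          refine F.ideal_norm (F.add_mem (F.abs_mem' hy₁) (F.abs_mem' hy₂))
            (Eventually.of_forall ?_)
          intro a; simpa using hvbound a
      _ ≤ F.norm (fun a => |y₁ a|) + F.norm (fun a => |y₂ a|) :=
          F.norm_add _ _ (F.abs_mem' hy₁) (F.abs_mem' hy₂)
      _ ≤ F.norm y₁ + F.norm y₂ := add_le_add (F.norm_abs_le' hy₁) (F.norm_abs_le' hy₂)
  refine ⟨u, huE, v, hvF, ?_, hunorm, hvnorm⟩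
  filter_upwards [h1, h2] with a e1 e2
  show z₁ a + z₂ a = u a * v a
  by_cases h : u a = 0
  · have h0 : |x₁ a| + |x₂ a| = 0 := h
    have hx1' : x₁ a = 0 := abs_eq_zero.mp
      (le_antisymm (by nlinarith [abs_nonneg (x₂ a)]) (abs_nonneg _))
    have hx2' : x₂ a = 0 := abs_eq_zero.mp
      (le_antisymm (by nlinarith [abs_nonneg (x₁ a)]) (abs_nonneg _))
    simp only [hv, h, if_true, mul_zero]
    rw [e1, e2]
    simp [Pi.mul_apply, hx1', hx2']
  · simp only [hv, h, if_false]
    rw [e1, e2]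
    simp only [Pi.mul_apply]
    field_simp

end Aux

/-- Corollary 1(i): the product quasi-norm satisfies the quasi-triangle inequality
with constant 2. -/
theorem prod_quasi_triangle (E F : IdealSpace μ) (z₁ z₂ : α → ℝ)
    (h₁ : z₁ ∈ prodSet E F) (h₂ : z₂ ∈ prodSet E F) :
    z₁ + z₂ ∈ prodSet E F ∧
    prodNorm E F (z₁ + z₂) ≤ 2 * (prodNorm E F z₁ + prodNorm E F z₂) := by
  constructor
  · obtain ⟨x₁, hx₁, y₁, hy₁, e1⟩ := h₁
    obtain ⟨x₂, hx₂, y₂, hy₂, e2⟩ := h₂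
    obtain ⟨u, hu, v, hv, he, _, _⟩ := sum_rep' E F hx₁ hy₁ e1 hx₂ hy₂ e2
    exact ⟨u, hu, v, hv, he⟩
  · set N₁ := prodNorm E F z₁ with hN₁
    set N₂ := prodNorm E F z₂ with hN₂
    have hN₁0 : 0 ≤ N₁ := prodNorm_nonneg' E F z₁
    have hN₂0 : 0 ≤ N₂ := prodNorm_nonneg' E F z₂
    refine le_of_forall_pos_le_add ?_
    intro ε hε
    have hδ : 0 < ε / 4 := by linarith
    obtain ⟨x₁, hx₁, y₁, hy₁, e1, hnx₁, hny₁⟩ := exists_balanced' E F h₁ hδ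
    obtain ⟨x₂, hx₂, y₂, hy₂, e2, hnx₂, hny₂⟩ := exists_balanced' E F h₂ hδ
    obtain ⟨u, hu, v, hv, he, hnu, hnv⟩ := sum_rep' E F hx₁ hy₁ e1 hx₂ hy₂ e2
    have hle : prodNorm E F (z₁ + z₂) ≤ E.norm u * F.norm v := prodNorm_le' E F hu hv he
    set A := Real.sqrt (N₁ + ε / 4) with hA
    set B := Real.sqrt (N₂ + ε / 4) with hB
    have hA0 : 0 ≤ A := Real.sqrt_nonneg _
    have hB0 : 0 ≤ B := Real.sqrt_nonneg _
    have hA2 : A * A = N₁ + ε / 4 := Real.mul_self_sqrt (by linarith)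
    have hB2 : B * B = N₂ + ε / 4 := Real.mul_self_sqrt (by linarith)
    have hu' : E.norm u ≤ A + B := le_trans hnu (add_le_add hnx₁ hnx₂)
    have hv' : F.norm v ≤ A + B := le_trans hnv (add_le_add hny₁ hny₂)
    have hprod : E.norm u * F.norm v ≤ (A + B) * (A + B) :=
      mul_le_mul hu' hv' (F.norm_nonneg v) (by linarith)
    have hsq : (A + B) * (A + B) ≤ 2 * (N₁ + N₂) + ε := by nlinarith [sq_nonneg (A - B)]
    linarith
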